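/- Let E be a real Banach space, let τ > 0, let F : [0, ∞) → E be continuous, and let q : [0, ∞) → E be differentiable with τ·q'(t) + q(t) + F(t) = 0 for all t ≥ 0. Then for all t ≥ 0 one has ‖q(t)‖ ≤ e^{−t/τ}·‖q(0)‖ + (1 − e^{−t/τ})·sup_{s ∈ [0,t]} ‖F(s)‖. -/

import Mathlib

/-!
Multiplying by the integrating factor `e^{s/τ}` turns `τ q' + q + F = 0` into
`(e^{s/τ} q)' = -(e^{s/τ}/τ) F`, whose norm is at most `M e^{s/τ}/τ` when `‖F‖ ≤ M`. Comparing
`e^{s/τ} q(s)` with the solution `‖q 0‖ + M (e^{s/τ} - 1)` of the scalar majorant equation and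
dividing by `e^{t/τ}` gives the bound; the weight `1 - e^{-t/τ}` in front of `M` is
`(1/τ) ∫₀ᵗ e^{-(t-s)/τ} ds`, which stays below `1` however small `τ` is.
-/

open Real Set

theorem le_biSup_of_bddAbove_image {α β : Type*} [ConditionallyCompleteLattice β] {f : α → β}
    {K : Set α} (hf : BddAbove (f '' K)) {s : α} (hs : s ∈ K) : f s ≤ ⨆ x ∈ K, f x := by
  have hrange : (⋃ x, range fun (_ : x ∈ K) => f x) = f '' K := by ext; simp
  exact le_ciSup₂ (hrange ▸ hf) s hs

theorem hasDerivAt_exp_div (τ s : ℝ) :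
    HasDerivAt (fun x => exp (x / τ)) (exp (s / τ) / τ) s := by
  simpa [div_eq_mul_inv] using ((hasDerivAt_id s).div_const τ).exp

section Relaxation

variable {E : Type*} [NormedAddCommGroup E] [NormedSpace ℝ E]

theorem hasDerivAt_exp_smul_of_relaxation {τ : ℝ} (hτ : τ ≠ 0) {F q : ℝ → E} {q' : E} {s : ℝ}
    (hq : HasDerivAt q q' s) (heq : τ • q' + q s + F s = 0) :
    HasDerivAt (fun x => exp (x / τ) • q x) (-(exp (s / τ) / τ) • F s) s := by
  have hq' : q' = -τ⁻¹ • (q s + F s) := by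
    rw [neg_smul, eq_neg_iff_add_eq_zero, ← smul_eq_zero_iff_right hτ, smul_add, smul_smul,
      mul_inv_cancel₀ hτ, one_smul, ← add_assoc, heq]
  refine ((hasDerivAt_exp_div τ s).smul hq).congr_deriv ?_
  rw [hq']
  module

theorem norm_le_of_relaxation {τ : ℝ} (hτ : 0 < τ) {F q q' : ℝ → E} {t M : ℝ} (ht : 0 ≤ t)
    (hq : ∀ s ∈ Icc 0 t, HasDerivAt q (q' s) s)
    (heq : ∀ s ∈ Icc 0 t, τ • q' s + q s + F s = 0) (hFM : ∀ s ∈ Icc 0 t, ‖F s‖ ≤ M) :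
    ‖q t‖ ≤ exp (-t / τ) * ‖q 0‖ + (1 - exp (-t / τ)) * M := by
  have hderiv (s) (hs : s ∈ Icc 0 t) :=
    hasDerivAt_exp_smul_of_relaxation hτ.ne' (hq s hs) (heq s hs)
  have hbound (s) (hs : s ∈ Ico 0 t) :
      ‖-(exp (s / τ) / τ) • F s‖ ≤ M * (exp (s / τ) / τ) := by
    rw [norm_smul, norm_neg, Real.norm_of_nonneg (by positivity), mul_comm]
    exact mul_le_mul_of_nonneg_right (hFM s (Ico_subset_Icc_self hs)) (by positivity)
  have hweighted : exp (t / τ) * ‖q t‖ ≤ ‖q 0‖ + M * (exp (t / τ) - 1) := by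
    have := image_norm_le_of_norm_deriv_right_le_deriv_boundary
      (fun s hs => (hderiv s hs).continuousAt.continuousWithinAt)
      (fun s hs => (hderiv s (Ico_subset_Icc_self hs)).hasDerivWithinAt)
      (B := fun s => ‖q 0‖ + M * (exp (s / τ) - 1)) (by simp)
      (fun s => (((hasDerivAt_exp_div τ s).sub_const 1).const_mul M).const_add _)
      hbound (right_mem_Icc.mpr ht)
    rwa [norm_smul, Real.norm_of_nonneg (exp_pos _).le] at this
  have hinv : exp (-t / τ) = (exp (t / τ))⁻¹ := by rw [neg_div, exp_neg]
  calc ‖q t‖ ≤ (‖q 0‖ + M * (exp (t / τ) - 1)) / exp (t / τ) :=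
        (le_div_iff₀' (exp_pos _)).mpr hweighted
    _ = _ := by
        rw [hinv]
        field_simp

end Relaxation

theorem relaxation_uniform_bound_general
    (E : Type*) [NormedAddCommGroup E] [NormedSpace ℝ E]
    (τ : ℝ) (hτ : 0 < τ)
    (F q q' : ℝ → E)
    (hF : ContinuousOn F (Set.Ici 0))
    (hq : ∀ t ∈ Set.Ici (0:ℝ), HasDerivAt q (q' t) t)
    (heq : ∀ t ∈ Set.Ici (0:ℝ), τ • q' t + q t + F t = 0) :
    ∀ t ∈ Set.Ici (0:ℝ),
      ‖q t‖ ≤ Real.exp (-t / τ) * ‖q 0‖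
        + (1 - Real.exp (-t / τ)) * ⨆ s ∈ Set.Icc (0:ℝ) t, ‖F s‖ := by
  intro t ht
  have hFt : ContinuousOn F (Icc 0 t) := hF.mono Icc_subset_Ici_self
  exact norm_le_of_relaxation hτ ht (fun s hs => hq s hs.1) (fun s hs => heq s hs.1)
    fun s hs => le_biSup_of_bddAbove_image
      (isCompact_Icc.image_of_continuousOn hFt.norm).bddAbove hs

/-- τ-uniform bound for the relaxation equation τ q' + q + F = 0 in a Banach space
(estimates (4.33)–(4.34) of the paper). -/
theorem relaxation_uniform_bound
    (E : Type*) [NormedAddCommGroup E] [NormedSpace ℝ E] [CompleteSpace E]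
    (τ : ℝ) (hτ : 0 < τ)
    (F q q' : ℝ → E)
    (hF : ContinuousOn F (Set.Ici 0))
    (hq : ∀ t ∈ Set.Ici (0:ℝ), HasDerivAt q (q' t) t)
    (heq : ∀ t ∈ Set.Ici (0:ℝ), τ • q' t + q t + F t = 0) :
    ∀ t ∈ Set.Ici (0:ℝ),
      ‖q t‖ ≤ Real.exp (-t / τ) * ‖q 0‖
        + (1 - Real.exp (-t / τ)) * ⨆ s ∈ Set.Icc (0:ℝ) t, ‖F s‖ :=
  relaxation_uniform_bound_general E τ hτ F q q' hF hq heq
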